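/- Let h₀ be the discrete Dirichlet Laplacian with hopping constant c > 0 on ℓ²(ℕ). For every E ∈ ℝ the limit g(E) = −lim_{ε↓0} ⟨δ₀, (h₀ − E − iε)^{−1} δ₀⟩ exists; moreover g(E) = (1/c)·e^{−iθ} whenever E = 2c·cos θ with θ ∈ [0,π], and g(E) = ±(1/c)·e^{−χ} whenever E = ±2c·cosh χ with χ ≥ 0. -/

import Mathlib

noncomputable section
open Complex Filter

/-- `ℓ²(ℕ)` with complex coefficients. -/
abbrev H1 : Type := lp (fun _ : ℕ => ℂ) 2

/-- The standard basis vector (Kronecker delta) at site `x`. -/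
def delta (x : ℕ) : H1 := lp.single 2 x (1 : ℂ)

/-!
For `Im z ≠ 0`, let `w` be the root of the characteristic equation `c w² + z w + c = 0` inside
the unit disc (the roots are `w, w⁻¹` and none has modulus one). Then `ψ n = w ^ (n + 1)` lies in
`ℓ²` and `(h₀ - z) ψ = c δ₀`, so `c ⟨δ₀, (h₀ - z)⁻¹ δ₀⟩ = w`; for `Im z > 0` this root lies in the
upper half plane. For every `z` the closed upper half disc contains at most one root, so as
`ε ↓ 0` the roots for `E + iε`, confined to this compact set, converge to the unique root for `E`:
`-e^{-iθ}` at `E = 2c cos θ` and `∓e^{-χ}` at `E = ±2c cosh χ`.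
-/

open ComplexConjugate

-- `ψ n = wⁿ` solves the eigenvalue recurrence `-c (ψ (n - 1) + ψ (n + 1)) = z ψ n`.
def IsCharRoot (c z w : ℂ) : Prop := c * w ^ 2 + z * w + c = 0

def closedUpperHalfDisc : Set ℂ := Metric.closedBall 0 1 ∩ {w | 0 ≤ w.im}

lemma isCompact_closedUpperHalfDisc : IsCompact closedUpperHalfDisc :=
  (isCompact_closedBall 0 1).inter_right (isClosed_le continuous_const continuous_im)

lemma mem_closedUpperHalfDisc {w : ℂ} : w ∈ closedUpperHalfDisc ↔ ‖w‖ ≤ 1 ∧ 0 ≤ w.im := by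
  simp [closedUpperHalfDisc]

namespace IsCharRoot

variable {c z w w' : ℂ}

lemma ne_zero (hc : c ≠ 0) (hw : IsCharRoot c z w) : w ≠ 0 := by
  rintro rfl
  exact hc (by simpa [IsCharRoot] using hw)

lemma neg (hw : IsCharRoot c z w) : IsCharRoot c (-z) (-w) := by
  unfold IsCharRoot at *
  linear_combination hw

lemma inv (hw : IsCharRoot c z w) : IsCharRoot c z w⁻¹ := by
  rcases eq_or_ne w 0 with rfl | hw0
  · simpa [IsCharRoot] using hw
  · unfold IsCharRoot at *
    field_simp
    linear_combination hw

lemma mul_eq_one_of_ne (hc : c ≠ 0) (hw : IsCharRoot c z w) (hw' : IsCharRoot c z w')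
    (hne : w ≠ w') : w * w' = 1 := by
  unfold IsCharRoot at hw hw'
  have hsum : c * (w + w') + z = 0 := by
    refine (mul_eq_zero.1 ?_).resolve_left (sub_ne_zero.2 hne)
    linear_combination hw - hw'
  have : c * (1 - w * w') = 0 := by linear_combination hw - w * hsum
  linear_combination -(mul_eq_zero.1 this).resolve_left hc

lemma eq_of_mem_closedUpperHalfDisc (hc : c ≠ 0) (hw : IsCharRoot c z w)
    (hw' : IsCharRoot c z w') (hws : w ∈ closedUpperHalfDisc) (hws' : w' ∈ closedUpperHalfDisc) :
    w = w' := by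
  rw [mem_closedUpperHalfDisc] at hws hws'
  by_contra hne
  have hprod := hw.mul_eq_one_of_ne hc hw' hne
  have hnorm : ‖w‖ = 1 := by
    have := congrArg norm hprod
    rw [norm_mul, norm_one] at this
    nlinarith [norm_nonneg w, norm_nonneg w']
  have hconj : w' = conj w := by
    rw [eq_inv_of_mul_eq_one_right hprod, inv_def, normSq_eq_norm_sq, hnorm]
    simp
  have him : w.im = 0 := by
    have := hws'.2
    rw [hconj, conj_im] at this
    linarith [hws.2]
  exact hne (hconj.trans (conj_eq_iff_im.2 him)).symm

lemma im_mul_normSq {c : ℝ} (hw : IsCharRoot c z w) :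
    z.im * normSq w = c * w.im * (1 - normSq w) := by
  have h := congrArg (fun v => (v * conj w).im) hw
  simp only [normSq_apply] at h ⊢
  simp only [sq, mul_im, add_re, mul_re, ofReal_re, ofReal_im, zero_mul, sub_zero, conj_im, mul_neg,
    add_im, add_zero, conj_re, zero_im] at h
  linear_combination h

lemma norm_ne_one {c : ℝ} (hz : z.im ≠ 0) (hw : IsCharRoot c z w) : ‖w‖ ≠ 1 := by
  intro h
  have := hw.im_mul_normSq
  rw [normSq_eq_norm_sq, h] at this
  exact hz (by simpa using this)

lemma im_pos {c : ℝ} (hc : 0 < c) (hz : 0 < z.im) (hw : IsCharRoot c z w) (hlt : ‖w‖ < 1) :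
    0 < w.im := by
  have hpos : 0 < normSq w := normSq_pos.2 (hw.ne_zero (ofReal_ne_zero.2 hc.ne'))
  have hlt' : normSq w < 1 := by
    rw [normSq_eq_norm_sq]
    nlinarith [norm_nonneg w]
  have h := hw.im_mul_normSq
  have : 0 < c * w.im * (1 - normSq w) := h ▸ mul_pos hz hpos
  exact pos_of_mul_pos_right (pos_of_mul_pos_left this (sub_pos.2 hlt').le) hc.le

end IsCharRoot

lemma exists_isCharRoot {c : ℂ} (hc : c ≠ 0) (z : ℂ) : ∃ w, IsCharRoot c z w := by
  obtain ⟨w, hw⟩ := exists_quadratic_eq_zero hc (IsAlgClosed.exists_eq_mul_self (discrim c z c))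
  exact ⟨w, by rw [IsCharRoot, sq]; exact hw⟩

lemma exists_isCharRoot_norm_lt_one {c : ℝ} (hc : c ≠ 0) {z : ℂ} (hz : z.im ≠ 0) :
    ∃ w, IsCharRoot c z w ∧ ‖w‖ < 1 := by
  obtain ⟨w, hw⟩ := exists_isCharRoot (ofReal_ne_zero.2 hc) z
  rcases (hw.norm_ne_one hz).lt_or_gt with hlt | hgt
  · exact ⟨w, hw, hlt⟩
  · exact ⟨w⁻¹, hw.inv, by rw [norm_inv]; exact inv_lt_one_of_one_lt₀ hgt⟩

lemma memℓp_geometric {w : ℂ} (hw : ‖w‖ < 1) : Memℓp (fun n : ℕ => w ^ (n + 1)) 2 := by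
  refine Memℓp.of_exponent_ge (memℓp_gen ?_) one_le_two
  simpa [pow_succ] using (summable_norm_geometric_of_norm_lt_one hw).mul_right ‖w‖

def geomVec (w : ℂ) (hw : ‖w‖ < 1) : H1 := ⟨fun n => w ^ (n + 1), memℓp_geometric hw⟩

section Dirichlet

variable {c : ℝ} {h0 : H1 →L[ℂ] H1}
  (hDir0 : ∀ ψ : H1, (h0 ψ) 0 = -(c : ℂ) * ψ 1)
  (hDir1 : ∀ (ψ : H1) (x : ℕ), (h0 ψ) (x + 1) = -(c : ℂ) * (ψ x + ψ (x + 2)))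
include hDir0 hDir1

lemma sub_smul_one_apply_geomVec {z w : ℂ} (hw : IsCharRoot c z w) (hw1 : ‖w‖ < 1) :
    (h0 - z • 1) (geomVec w hw1) = (c : ℂ) • delta 0 := by
  unfold IsCharRoot at hw
  have happly (ψ : H1) (x : ℕ) : ((h0 - z • 1) ψ) x = h0 ψ x - z * ψ x := rfl
  ext (_ | x)
  · rw [happly, hDir0, lp.coeFn_smul, Pi.smul_apply, delta, lp.single_apply_self]
    change -(c : ℂ) * w ^ 2 - z * w ^ 1 = (c : ℂ) * 1
    linear_combination -hw
  · rw [happly, hDir1, lp.coeFn_smul, Pi.smul_apply, delta,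
      lp.single_apply_ne _ _ _ (Nat.succ_ne_zero x)]
    change -(c : ℂ) * (w ^ (x + 1) + w ^ (x + 3)) - z * w ^ (x + 2) = (c : ℂ) * 0
    linear_combination (-w ^ (x + 1)) * hw

lemma mul_inner_delta_resolvent {z w : ℂ} (Rz : H1 →L[ℂ] H1)
    (hR : Rz * (h0 - z • 1) = 1) (hw : IsCharRoot c z w) (hw1 : ‖w‖ < 1) :
    c * inner ℂ (delta 0) (Rz (delta 0)) = w := by
  have hRδ : Rz ((c : ℂ) • delta 0) = geomVec w hw1 := by
    rw [← sub_smul_one_apply_geomVec hDir0 hDir1 hw hw1, ← mul_apply_eq_comp, hR, one_apply_eq_self]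
  calc c * inner ℂ (delta 0) (Rz (delta 0))
      = inner ℂ (delta 0) (Rz ((c : ℂ) • delta 0)) := by rw [map_smul, inner_smul_right]
    _ = w := by rw [hRδ, delta, lp.inner_single_left]; simp [geomVec]

lemma isCharRoot_mul_inner_resolvent (hc : 0 < c) {z : ℂ} (hz : 0 < z.im) (Rz : H1 →L[ℂ] H1)
    (hR : Rz * (h0 - z • 1) = 1) :
    IsCharRoot c z (c * inner ℂ (delta 0) (Rz (delta 0))) ∧
      c * inner ℂ (delta 0) (Rz (delta 0)) ∈ closedUpperHalfDisc := by
  obtain ⟨w, hw, hw1⟩ := exists_isCharRoot_norm_lt_one hc.ne' hz.ne'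
  rw [mul_inner_delta_resolvent hDir0 hDir1 Rz hR hw hw1, mem_closedUpperHalfDisc]
  exact ⟨hw, hw1.le, (hw.im_pos hc hz hw1).le⟩

end Dirichlet

lemma exists_tendsto_of_isCharRoot {ι : Type*} {l : Filter ι} [l.NeBot] {c z₀ : ℂ} (hc : c ≠ 0)
    {z u : ι → ℂ} (hz : Tendsto z l (nhds z₀))
    (hu : ∀ᶠ i in l, IsCharRoot c (z i) (u i) ∧ u i ∈ closedUpperHalfDisc) :
    ∃ w₀, (IsCharRoot c z₀ w₀ ∧ w₀ ∈ closedUpperHalfDisc) ∧ Tendsto u l (nhds w₀) := by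
  set G : ℂ → ℂ := fun w => c * w ^ 2 + z₀ * w + c
  have hGu : Tendsto (G ∘ u) l (nhds 0) := by
    refine squeeze_zero_norm' ?_ (tendsto_iff_norm_sub_tendsto_zero.1 hz)
    filter_upwards [hu] with i ⟨hroot, hmem⟩
    have : G (u i) = (z₀ - z i) * u i := by
      unfold IsCharRoot at hroot
      linear_combination hroot
    rw [Function.comp_apply, this, norm_mul, norm_sub_rev]
    exact mul_le_of_le_one_right (norm_nonneg _) (mem_closedUpperHalfDisc.1 hmem).1
  have hroot : ∀ w, MapClusterPt w l u → IsCharRoot c z₀ w := by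
    intro w hw
    have : ClusterPt (G w) (nhds 0) :=
      ((hw.continuousAt_comp (by fun_prop : Continuous G).continuousAt).clusterPt).mono hGu
    by_contra hne
    exact this.ne (disjoint_iff.1 (disjoint_nhds_nhds.2 hne))
  have hmem : ∀ᶠ i in l, u i ∈ closedUpperHalfDisc := hu.mono fun _ h => h.2
  obtain ⟨w₀, hw₀, hcl⟩ :=
    isCompact_closedUpperHalfDisc.exists_mapClusterPt_of_frequently hmem.frequently
  refine ⟨w₀, ⟨hroot w₀ hcl, hw₀⟩,
    isCompact_closedUpperHalfDisc.tendsto_nhds_of_unique_mapClusterPt hmem fun w hw hclw => ?_⟩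
  exact (hroot w hclw).eq_of_mem_closedUpperHalfDisc hc (hroot w₀ hcl) hw hw₀

lemma isCharRoot_neg_exp_neg (c s : ℂ) : IsCharRoot c (c * (exp s + exp (-s))) (-exp (-s)) := by
  unfold IsCharRoot
  have : exp s * exp (-s) = 1 := by rw [← exp_add, add_neg_cancel, exp_zero]
  linear_combination -c * this

lemma isCharRoot_two_mul_cos (c θ : ℝ) : IsCharRoot c (2 * c * Real.cos θ : ℝ) (-exp (-I * θ)) := by
  convert isCharRoot_neg_exp_neg c (θ * I) using 2
  · push_cast
    rw [← neg_mul, ← two_cos]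
    ring
  · ring_nf

lemma isCharRoot_two_mul_cosh (c χ : ℝ) : IsCharRoot c (2 * c * Real.cosh χ : ℝ) (-exp (-χ)) := by
  convert isCharRoot_neg_exp_neg c χ using 2
  push_cast
  rw [← two_cosh]
  ring

lemma isCharRoot_neg_two_mul_cosh (c χ : ℝ) :
    IsCharRoot c (-(2 * c * Real.cosh χ) : ℝ) (exp (-χ)) := by
  simpa using (isCharRoot_two_mul_cosh c χ).neg

lemma neg_exp_neg_I_mul_mem_closedUpperHalfDisc {θ : ℝ} (hθ : θ ∈ Set.Icc 0 Real.pi) :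
    -exp (-I * θ) ∈ closedUpperHalfDisc := by
  rw [mem_closedUpperHalfDisc, norm_neg, neg_im, show -I * θ = (-θ : ℝ) * I by push_cast; ring,
    norm_exp_ofReal_mul_I, exp_ofReal_mul_I_im, Real.sin_neg, neg_neg]
  exact ⟨le_rfl, Real.sin_nonneg_of_nonneg_of_le_pi hθ.1 hθ.2⟩

lemma exp_neg_mem_closedUpperHalfDisc {χ : ℝ} (hχ : 0 ≤ χ) :
    exp (-χ) ∈ closedUpperHalfDisc := by
  rw [mem_closedUpperHalfDisc, ← ofReal_neg, norm_exp_ofReal, exp_ofReal_im]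
  exact ⟨Real.exp_le_one_iff.2 (neg_nonpos.2 hχ), le_rfl⟩

lemma neg_exp_neg_mem_closedUpperHalfDisc {χ : ℝ} (hχ : 0 ≤ χ) :
    -exp (-χ) ∈ closedUpperHalfDisc := by
  rw [mem_closedUpperHalfDisc, norm_neg, neg_im, ← ofReal_neg, exp_ofReal_im, neg_zero, ofReal_neg]
  exact ⟨(mem_closedUpperHalfDisc.1 (exp_neg_mem_closedUpperHalfDisc hχ)).1, le_rfl⟩

theorem dirichlet_laplacian_diagonal_boundary_value_general
    (c : ℝ) (hc : 0 < c)
    (h0 : H1 →L[ℂ] H1)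
    (hDir0 : ∀ ψ : H1, (h0 ψ) 0 = -(c : ℂ) * ψ 1)
    (hDir1 : ∀ (ψ : H1) (x : ℕ), (h0 ψ) (x + 1) = -(c : ℂ) * (ψ x + ψ (x + 2)))
    (R : ℂ → (H1 →L[ℂ] H1))
    (hR : ∀ z : ℂ, z.im ≠ 0 → (h0 - z • 1) * R z = 1 ∧ R z * (h0 - z • 1) = 1) :
    ∃ g : ℝ → ℂ,
      (∀ E : ℝ,
        Tendsto (fun ε : ℝ => -(inner ℂ (delta 0) (R ((E : ℂ) + (ε : ℂ) * I) (delta 0)) : ℂ))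
          (nhdsWithin 0 (Set.Ioi 0)) (nhds (g E))) ∧
      (∀ θ : ℝ, θ ∈ Set.Icc 0 Real.pi →
        g (2 * c * Real.cos θ) = (1 / (c : ℂ)) * Complex.exp (-I * (θ : ℂ))) ∧
      (∀ χ : ℝ, 0 ≤ χ →
        g (2 * c * Real.cosh χ) = (1 / (c : ℂ)) * Complex.exp (-(χ : ℂ)) ∧
        g (-(2 * c * Real.cosh χ)) = -((1 / (c : ℂ)) * Complex.exp (-(χ : ℂ)))) := by
  have hc' : (c : ℂ) ≠ 0 := ofReal_ne_zero.2 hc.ne'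
  have hlim (E : ℝ) : ∃ w₀, (IsCharRoot c E w₀ ∧ w₀ ∈ closedUpperHalfDisc) ∧
      Tendsto (fun ε : ℝ => c * inner ℂ (delta 0) (R (E + ε * I) (delta 0)))
        (nhdsWithin 0 (Set.Ioi 0)) (nhds w₀) := by
    refine exists_tendsto_of_isCharRoot hc' (z := fun ε : ℝ => (E : ℂ) + ε * I) ?_
      (eventually_nhdsWithin_of_forall fun ε hε => ?_)
    · refine tendsto_nhdsWithin_of_tendsto_nhds ?_
      exact (by fun_prop : Continuous fun ε : ℝ => (E : ℂ) + ε * I).tendsto' 0 _ (by simp)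
    · have him : 0 < ((E : ℂ) + ε * I).im := by simpa using hε
      exact isCharRoot_mul_inner_resolvent hDir0 hDir1 hc him _ (hR _ him.ne').2
  choose W hW hWlim using hlim
  have hW_eq {E : ℝ} {ζ : ℂ} (hζ : IsCharRoot c E ζ) (hζs : ζ ∈ closedUpperHalfDisc) : W E = ζ :=
    (hW E).1.eq_of_mem_closedUpperHalfDisc hc' hζ (hW E).2 hζs
  refine ⟨fun E => -W E / c, fun E => ?_, fun θ hθ => ?_, fun χ hχ => ⟨?_, ?_⟩⟩
  · refine ((hWlim E).neg.div_const (c : ℂ)).congr fun ε => ?_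
    field_simp
  · dsimp only
    rw [hW_eq (isCharRoot_two_mul_cos c θ) (neg_exp_neg_I_mul_mem_closedUpperHalfDisc hθ)]
    ring
  · dsimp only
    rw [hW_eq (isCharRoot_two_mul_cosh c χ) (neg_exp_neg_mem_closedUpperHalfDisc hχ)]
    ring
  · dsimp only
    rw [hW_eq (isCharRoot_neg_two_mul_cosh c χ) (exp_neg_mem_closedUpperHalfDisc hχ)]
    ring

/-- existence and explicit values of the boundary value
`g(E) = -lim_{ε↓0} ⟨δ₀, (h₀ - E - iε)⁻¹ δ₀⟩` of the diagonal resolvent matrix element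
of the discrete Dirichlet Laplacian at site `0`. -/
theorem dirichlet_laplacian_diagonal_boundary_value
    (c : ℝ) (hc : 0 < c)
    (h0 : H1 →L[ℂ] H1) (h0sa : IsSelfAdjoint h0)
    (hDir0 : ∀ ψ : H1, (h0 ψ) 0 = -(c : ℂ) * ψ 1)
    (hDir1 : ∀ (ψ : H1) (x : ℕ), (h0 ψ) (x + 1) = -(c : ℂ) * (ψ x + ψ (x + 2)))
    (R : ℂ → (H1 →L[ℂ] H1))
    (hR : ∀ z : ℂ, z.im ≠ 0 → (h0 - z • 1) * R z = 1 ∧ R z * (h0 - z • 1) = 1) :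
    ∃ g : ℝ → ℂ,
      (∀ E : ℝ,
        Tendsto (fun ε : ℝ => -(inner ℂ (delta 0) (R ((E : ℂ) + (ε : ℂ) * I) (delta 0)) : ℂ))
          (nhdsWithin 0 (Set.Ioi 0)) (nhds (g E))) ∧
      (∀ θ : ℝ, θ ∈ Set.Icc 0 Real.pi →
        g (2 * c * Real.cos θ) = (1 / (c : ℂ)) * Complex.exp (-I * (θ : ℂ))) ∧
      (∀ χ : ℝ, 0 ≤ χ →
        g (2 * c * Real.cosh χ) = (1 / (c : ℂ)) * Complex.exp (-(χ : ℂ)) ∧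
        g (-(2 * c * Real.cosh χ)) = -((1 / (c : ℂ)) * Complex.exp (-(χ : ℂ)))) :=
  dirichlet_laplacian_diagonal_boundary_value_general c hc h0 hDir0 hDir1 R hR
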